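/- Let C = ⟨v_1, …, v_k⟩ be a convex polygonal chain (all turns in the same direction) whose total turning angle is strictly less than 180°. Then the ray from v_1 through v_2 and the ray from v_k through v_{k−1} intersect, i.e., C is simplifiable. -/

import Mathlib

open EuclideanGeometry Metric Set
open scoped RealInnerProductSpace

noncomputable section

/-- The plane. -/
abbrev Pt := EuclideanSpace ℝ (Fin 2)

/-- The union of the segments of an (open) polygonal chain with vertex list `l`. -/
def segChain (l : List Pt) : Set Pt := ⋃ p ∈ l.zip l.tail, segment ℝ p.1 p.2

/-- The length of a polygonal chain. -/
def chainLength (l : List Pt) : ℝ := ((l.zip l.tail).map fun z => dist z.1 z.2).sum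

/-- Cyclic indexing into a vertex list. -/
def cyclicGet (l : List Pt) (n : ℕ) : Pt := l.getD (n % l.length) 0

/-- The `i`-th edge (a closed segment) of the closed polygonal curve with vertex list `l`. -/
def edgeSeg (l : List Pt) (i : ℕ) : Set Pt := segment ℝ (cyclicGet l i) (cyclicGet l (i + 1))

/-- The closed polygonal curve with vertex list `l`. -/
def closedChain (l : List Pt) : Set Pt := ⋃ i ∈ Finset.range l.length, edgeSeg l i

/-- `v` is a point of local non-convexity of `R` (interior angle exceeding 180°). -/
def ReflexAt (R : Set Pt) (v : Pt) : Prop :=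
  ∀ ε > 0, ∃ p ∈ R ∩ ball v ε, ∃ q ∈ R ∩ ball v ε, ¬ segment ℝ p q ⊆ R

/-- A simple polygon: a compact connected closed planar region bounded by a simple closed
polygonal curve through its vertices, any two edges meeting only in shared endpoints. -/
structure SimplePolygon where
  verts : List Pt
  region : Set Pt
  three_le : 3 ≤ verts.length
  nodup : verts.Nodup
  closed' : IsClosed region
  compact' : IsCompact region
  connected' : IsConnected region
  boundary' : frontier region = closedChain verts
  simple' : ∀ i j, i < verts.length → j < verts.length → i ≠ j →
    edgeSeg verts i ∩ edgeSeg verts j ⊆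
      ({cyclicGet verts i, cyclicGet verts (i + 1)} ∩
        {cyclicGet verts j, cyclicGet verts (j + 1)} : Set Pt)

/-- A reflex vertex: a vertex whose interior angle exceeds 180°. -/
def SimplePolygon.IsReflex (P : SimplePolygon) (v : Pt) : Prop :=
  v ∈ P.verts ∧ ReflexAt P.region v

/-- A convex vertex: a vertex that is not reflex. -/
def SimplePolygon.IsConvexVtx (P : SimplePolygon) (v : Pt) : Prop :=
  v ∈ P.verts ∧ ¬ ReflexAt P.region v

/-- `P'` subsumes `P`: `P ⊆ P'` and both polygons have the same reflex vertices
(at the same positions). -/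
def Subsumes (P' P : SimplePolygon) : Prop :=
  P.region ⊆ P'.region ∧ ∀ v, P.IsReflex v ↔ P'.IsReflex v

/-- `l` is a polygonal path from `p` to `q` staying inside the region `R`. -/
def IsPathIn (R : Set Pt) (p q : Pt) (l : List Pt) : Prop :=
  l.head? = some p ∧ l.getLast? = some q ∧ segChain l ⊆ R ∧ p ∈ R ∧ q ∈ R

/-- `l` is a geodesic (shortest) path from `p` to `q` inside `R`.  (In a polygon every
shortest path is polygonal, so it suffices to compare against polygonal competitors.) -/
def IsGeodesic (R : Set Pt) (p q : Pt) (l : List Pt) : Prop :=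
  IsPathIn R p q l ∧ ∀ l', IsPathIn R p q l' → chainLength l ≤ chainLength l'
/-- The ray from `p` in direction `d`. -/
def ray (p d : Pt) : Set Pt := {x | ∃ t : ℝ, 0 ≤ t ∧ x = p + t • d}

/-- The unit vector from `p` towards `q`. -/
def udir (p q : Pt) : Pt := ‖q - p‖⁻¹ • (q - p)

/-- A chain is hull-honest if it is completely contained in the boundary of its convex hull. -/
def HullHonest (l : List Pt) : Prop :=
  segChain l ⊆ frontier (convexHull ℝ {x | x ∈ l})

/-- The ray from the first vertex of `l` through its second vertex intersects the ray from
the last vertex of `l` through its second-to-last vertex. -/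
def EndRaysMeet (l : List Pt) : Prop :=
  (ray (l.getD 0 0) (l.getD 1 0 - l.getD 0 0) ∩
    ray (l.getD (l.length - 1) 0) (l.getD (l.length - 2) 0 - l.getD (l.length - 1) 0)).Nonempty

/-- A chain is simplifiable if it is hull-honest and its two end rays intersect. -/
def Simplifiable (l : List Pt) : Prop :=
  2 ≤ l.length ∧ HullHonest l ∧ EndRaysMeet l

/-- The planar cross product of two vectors. -/
def cross2 (u v : Pt) : ℝ := u 0 * v 1 - u 1 * v 0

/-- The total turning angle of a chain: the sum of the exterior turning angles at its
interior vertices. -/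
def turningAngle (l : List Pt) : ℝ :=
  ∑ i ∈ Finset.range (l.length - 2),
    (Real.pi - EuclideanGeometry.angle (l.getD i 0) (l.getD (i + 1) 0) (l.getD (i + 2) 0))

/-- A convex polygonal chain: a simple chain with nondegenerate edges in which consecutive
edges always turn in the same rotational direction. -/
def ConvexChain (l : List Pt) : Prop :=
  l.Nodup ∧ 2 ≤ l.length ∧
  ((∀ i, i + 2 < l.length →
      0 ≤ cross2 (l.getD (i + 1) 0 - l.getD i 0) (l.getD (i + 2) 0 - l.getD (i + 1) 0)) ∨
    (∀ i, i + 2 < l.length →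
      cross2 (l.getD (i + 1) 0 - l.getD i 0) (l.getD (i + 2) 0 - l.getD (i + 1) 0) ≤ 0))

/-!
Write every edge as `d j = ρ j • R (Θ j) (d 0)` with `ρ j > 0`, where `R` rotates in the common
turning direction and `Θ j` is the total turn before edge `j`. Then `Θ` is nondecreasing and
stays below `π`. Consequently every edge lies in the cone spanned by the first and the last edge;
hence so does their sum `v (k - 1) - v 0`, which says exactly that the two end rays meet.
Likewise `sin (Θ j - Θ i) ≥ 0` for `i ≤ j` shows that all vertices lie on one side of the line
through each edge, so each edge is on the boundary of the convex hull.
-/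

open Real

lemma norm_sq_eq_coord (u : Pt) : ‖u‖ ^ 2 = u 0 ^ 2 + u 1 ^ 2 := by
  simp [EuclideanSpace.norm_sq_eq, Fin.sum_univ_two]

lemma inner_eq_coord (u v : Pt) : ⟪u, v⟫ = u 0 * v 0 + u 1 * v 1 := by
  simp [PiLp.inner_apply, Fin.sum_univ_two]; ring

lemma cross2_self (u : Pt) : cross2 u u = 0 := by
  simp only [cross2]; ring

lemma cross2_swap (u v : Pt) : cross2 v u = -cross2 u v := by
  simp only [cross2]; ring

lemma cross2_smul_left (c : ℝ) (u v : Pt) : cross2 (c • u) v = c * cross2 u v := by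
  simp [cross2]; ring

lemma cross2_smul_right (c : ℝ) (u v : Pt) : cross2 u (c • v) = c * cross2 u v := by
  simp [cross2]; ring

lemma cross2_sub_right (u v w : Pt) : cross2 u (v - w) = cross2 u v - cross2 u w := by
  simp [cross2]; ring

lemma cross2_neg_right (u v : Pt) : cross2 u (-v) = -cross2 u v := by
  simp [cross2]; ring

lemma cross2_sum_right {ι : Type*} (s : Finset ι) (u : Pt) (f : ι → Pt) :
    cross2 u (∑ j ∈ s, f j) = ∑ j ∈ s, cross2 u (f j) := by
  simp [cross2, Finset.mul_sum]

lemma cross2_sq_eq (u v : Pt) : cross2 u v ^ 2 = ⟪u, u⟫ * ⟪v, v⟫ - ⟪u, v⟫ * ⟪u, v⟫ := by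
  simp only [cross2, inner_eq_coord]; ring

def perp (u : Pt) : Pt := !₂[-u 1, u 0]

lemma smul_eq_inner_smul_add_cross2_smul_perp (u v : Pt) :
    ‖u‖ ^ 2 • v = ⟪u, v⟫ • u + cross2 u v • perp u := by
  ext i; fin_cases i <;> simp [perp, cross2, norm_sq_eq_coord, inner_eq_coord] <;> ring

lemma cross2_eq_inner_perp (u v : Pt) : cross2 u v = ⟪perp u, v⟫ := by
  simp [cross2, perp, inner_eq_coord]; ring

lemma perp_ne_zero {u : Pt} (hu : u ≠ 0) : perp u ≠ 0 := by
  contrapose! hu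
  ext i; fin_cases i
  · simpa [perp] using congr($hu 1)
  · simpa [perp] using congr($hu 0)

/-- Rotation by `θ`, counterclockwise for `e = 1` and clockwise for `e = -1`. -/
def rot (e θ : ℝ) (u : Pt) : Pt := cos θ • u + (e * sin θ) • perp u

lemma rot_zero (e : ℝ) (u : Pt) : rot e 0 u = u := by
  simp [rot]

lemma rot_smul (e θ c : ℝ) (u : Pt) : rot e θ (c • u) = c • rot e θ u := by
  ext i; fin_cases i <;> simp [rot, perp] <;> ring

lemma rot_rot {e : ℝ} (he : e = 1 ∨ e = -1) (θ φ : ℝ) (u : Pt) :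
    rot e φ (rot e θ u) = rot e (θ + φ) u := by
  ext i; rcases he with rfl | rfl <;> fin_cases i <;>
    simp [rot, perp, cos_add, sin_add] <;> ring

lemma cross2_rot_rot {e : ℝ} (he : e = 1 ∨ e = -1) (α β : ℝ) (u : Pt) :
    cross2 (rot e α u) (rot e β u) = e * sin (β - α) * ‖u‖ ^ 2 := by
  rcases he with rfl | rfl <;> simp [rot, perp, cross2, norm_sq_eq_coord, sin_sub] <;> ring

open InnerProductGeometry in
lemma exists_eq_smul_rot_angle {e : ℝ} (he : e = 1 ∨ e = -1) {u v : Pt} (hu : u ≠ 0)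
    (hv : v ≠ 0) (huv : 0 ≤ e * cross2 u v) :
    ∃ ρ : ℝ, 0 < ρ ∧ v = ρ • rot e (angle u v) u := by
  have he2 : e ^ 2 = 1 := by rcases he with rfl | rfl <;> norm_num
  have hu2 : ‖u‖ ^ 2 ≠ 0 := by positivity
  have hsin : sin (angle u v) * (‖u‖ * ‖v‖) = e * cross2 u v := by
    rw [sin_angle_mul_norm_mul_norm, ← cross2_sq_eq, ← one_mul (cross2 u v ^ 2), ← he2,
      ← mul_pow, Real.sqrt_sq huv]
  refine ⟨‖v‖ / ‖u‖, by positivity, smul_right_injective Pt hu2 ?_⟩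
  calc ‖u‖ ^ 2 • v = ⟪u, v⟫ • u + (e ^ 2 * cross2 u v) • perp u := by
        rw [he2, one_mul, smul_eq_inner_smul_add_cross2_smul_perp]
    _ = ‖u‖ ^ 2 • (‖v‖ / ‖u‖) • rot e (angle u v) u := by
        rw [← cos_angle_mul_norm_mul_norm, smul_smul, rot, smul_add, smul_smul, smul_smul]
        congr 1
        · congr 1; field_simp
        · rw [pow_two e, mul_assoc, ← hsin]; congr 1; field_simp

lemma mem_frontier_convexHull_of_inner_le {E : Type*} [NormedAddCommGroup E]
    [InnerProductSpace ℝ E] {s : Set E} {c x : E} (hc : c ≠ 0) (hx : x ∈ convexHull ℝ s)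
    (hmin : ∀ y ∈ s, ⟪c, x⟫ ≤ ⟪c, y⟫) : x ∈ frontier (convexHull ℝ s) := by
  have hle : ∀ y ∈ convexHull ℝ s, ⟪c, x⟫ ≤ ⟪c, y⟫ := fun y hy =>
    convexHull_min hmin (convex_halfSpace_ge (innerSL ℝ c).toLinearMap.isLinear _) hy
  refine ⟨subset_closure hx, fun hint => hc ?_⟩
  have hloc : IsLocalMin (fun y => ⟪c, y⟫) x :=
    Filter.mem_of_superset (mem_interior_iff_mem_nhds.1 hint) hle
  have hzero := hloc.hasFDerivAt_eq_zero (innerSL ℝ c).hasFDerivAt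
  simpa using congr($hzero c)

lemma smul_rot_mem_hull {e θ A ρ σ : ℝ} (hθ : 0 ≤ θ) (hθA : θ ≤ A) (hA : A < π) (hρ : 0 ≤ ρ)
    (hσ : 0 < σ) (u : Pt) : ρ • rot e θ u ∈ PointedCone.hull ℝ {u, σ • rot e A u} := by
  -- `sin A • rot e θ u = sin (A - θ) • u + sin θ • rot e A u`
  refine (PointedCone.hull ℝ _).smul_mem hρ (Submodule.mem_span_pair.mpr ?_)
  rcases hθ.eq_or_lt with rfl | hθ
  · exact ⟨1, 0, by simp [rot_zero]⟩
  have hsA : 0 < sin A := sin_pos_of_pos_of_lt_pi (hθ.trans_le hθA) hA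
  refine ⟨⟨sin (A - θ) / sin A, div_nonneg (sin_nonneg_of_nonneg_of_le_pi
      (by linarith) (by linarith)) hsA.le⟩,
    ⟨sin θ / (σ * sin A), div_nonneg (sin_nonneg_of_nonneg_of_le_pi hθ.le
      (by linarith)) (by positivity)⟩, ?_⟩
  ext i; fin_cases i <;> simp [rot, Nonneg.mk_smul, sin_sub] <;> field_simp <;> ring

def edge (v : ℕ → Pt) (i : ℕ) : Pt := v (i + 1) - v i

def turnSum (v : ℕ → Pt) (n : ℕ) : ℝ :=
  ∑ m ∈ Finset.range n, (π - ∠ (v m) (v (m + 1)) (v (m + 2)))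

lemma turnSum_zero (v : ℕ → Pt) : turnSum v 0 = 0 := by simp [turnSum]

lemma turnSum_succ (v : ℕ → Pt) (n : ℕ) :
    turnSum v (n + 1) = turnSum v n + (π - ∠ (v n) (v (n + 1)) (v (n + 2))) :=
  Finset.sum_range_succ _ _

lemma monotone_turnSum (v : ℕ → Pt) : Monotone (turnSum v) :=
  monotone_nat_of_le_succ fun n => by
    rw [turnSum_succ]; linarith [EuclideanGeometry.angle_le_pi (v n) (v (n + 1)) (v (n + 2))]

lemma turnSum_nonneg (v : ℕ → Pt) (n : ℕ) : 0 ≤ turnSum v n :=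
  turnSum_zero v ▸ monotone_turnSum v n.zero_le

lemma angle_edge_edge (v : ℕ → Pt) (n : ℕ) :
    InnerProductGeometry.angle (edge v n) (edge v (n + 1)) =
      π - ∠ (v n) (v (n + 1)) (v (n + 2)) := by
  rw [EuclideanGeometry.angle, edge, edge, ← neg_sub, InnerProductGeometry.angle_neg_left]
  rfl

structure ConvexPath (e : ℝ) (k : ℕ) (v : ℕ → Pt) : Prop where
  sign : e = 1 ∨ e = -1
  edge_ne_zero : ∀ i, i + 1 < k → edge v i ≠ 0
  turn_nonneg : ∀ i, i + 2 < k → 0 ≤ e * cross2 (edge v i) (edge v (i + 1))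

namespace ConvexPath

variable {e : ℝ} {k : ℕ} {v : ℕ → Pt}

lemma edge_eq_smul_rot (hv : ConvexPath e k v) :
    ∀ j, j + 1 < k → ∃ ρ : ℝ, 0 < ρ ∧ edge v j = ρ • rot e (turnSum v j) (edge v 0)
  | 0, _ => ⟨1, one_pos, by rw [turnSum_zero, rot_zero, one_smul]⟩
  | j + 1, hj => by
    obtain ⟨ρ, hρ, hρj⟩ := hv.edge_eq_smul_rot j (by omega)
    obtain ⟨σ, hσ, hσj⟩ := exists_eq_smul_rot_angle hv.sign (hv.edge_ne_zero j (by omega))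
      (hv.edge_ne_zero (j + 1) hj) (hv.turn_nonneg j hj)
    refine ⟨σ * ρ, by positivity, ?_⟩
    rw [hσj, angle_edge_edge, hρj, rot_smul, rot_rot hv.sign, smul_smul, turnSum_succ]

lemma cross2_edge_nonneg (hv : ConvexPath e k v) (ht : turnSum v (k - 2) < π) {i j : ℕ}
    (hij : i ≤ j) (hj : j + 1 < k) : 0 ≤ e * cross2 (edge v i) (edge v j) := by
  obtain ⟨ρ, hρ, hi⟩ := hv.edge_eq_smul_rot i (by omega)
  obtain ⟨σ, hσ, hj⟩ := hv.edge_eq_smul_rot j hj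
  have hsin : 0 ≤ sin (turnSum v j - turnSum v i) :=
    sin_nonneg_of_nonneg_of_le_pi (sub_nonneg.2 (monotone_turnSum v hij))
      (by linarith [monotone_turnSum v (show j ≤ k - 2 by omega), turnSum_nonneg v i])
  have he2 : e * e = 1 := by rcases hv.sign with rfl | rfl <;> norm_num
  rw [hi, hj, cross2_smul_left, cross2_smul_right, cross2_rot_rot hv.sign]
  set X := ρ * σ * sin (turnSum v j - turnSum v i) * ‖edge v 0‖ ^ 2
  calc 0 ≤ X := by positivity
    _ = _ := by linear_combination -X * he2

/-- All vertices lie on one side of the line through any edge. -/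
lemma cross2_edge_sub_nonneg (hv : ConvexPath e k v) (ht : turnSum v (k - 2) < π) {i m : ℕ}
    (hi : i + 1 < k) (hm : m < k) : 0 ≤ e * cross2 (edge v i) (v m - v i) := by
  rcases le_total i m with him | hmi
  · rw [← Finset.sum_Ico_sub v him, cross2_sum_right, Finset.mul_sum]
    exact Finset.sum_nonneg fun j hj => hv.cross2_edge_nonneg ht (Finset.mem_Ico.1 hj).1
      (by have := Finset.mem_Ico.1 hj; omega)
  · rw [← neg_sub, ← Finset.sum_Ico_sub v hmi, cross2_neg_right, cross2_sum_right,
      ← Finset.sum_neg_distrib, Finset.mul_sum]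
    refine Finset.sum_nonneg fun j hj => ?_
    rw [← cross2_swap]
    exact hv.cross2_edge_nonneg ht (Finset.mem_Ico.1 hj).2.le hi

lemma segment_subset_frontier_convexHull (hv : ConvexPath e k v) (ht : turnSum v (k - 2) < π)
    {i : ℕ} (hi : i + 1 < k) :
    segment ℝ (v i) (v (i + 1)) ⊆ frontier (convexHull ℝ (v '' Iio k)) := by
  set c := e • perp (edge v i)
  have hc : ∀ y, ⟪c, y⟫ = e * cross2 (edge v i) y := fun y => by
    rw [real_inner_smul_left, cross2_eq_inner_perp]
  have hmin : ∀ m < k, ⟪c, v i⟫ ≤ ⟪c, v m⟫ := fun m hm => by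
    have := hv.cross2_edge_sub_nonneg ht hi hm
    rw [cross2_sub_right, mul_sub, ← hc, ← hc] at this
    linarith
  have hi1 : ⟪c, v (i + 1)⟫ = ⟪c, v i⟫ := by
    have : ⟪c, edge v i⟫ = 0 := by rw [hc, cross2_self, mul_zero]
    rwa [edge, inner_sub_right, sub_eq_zero] at this
  rintro x hx
  have hxi : ⟪c, x⟫ = ⟪c, v i⟫ := by
    obtain ⟨a, b, -, -, hab, rfl⟩ := hx
    rw [inner_add_right, real_inner_smul_right, real_inner_smul_right, hi1, ← add_mul, hab,
      one_mul]
  have hc0 : c ≠ 0 := smul_ne_zero (by rcases hv.sign with rfl | rfl <;> norm_num)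
    (perp_ne_zero (hv.edge_ne_zero i hi))
  have hx_hull : x ∈ convexHull ℝ (v '' Iio k) := (convex_convexHull ℝ _).segment_subset
    (subset_convexHull ℝ _ (mem_image_of_mem v (show i ∈ Iio k by simp; omega)))
    (subset_convexHull ℝ _ (mem_image_of_mem v (show i + 1 ∈ Iio k from hi))) hx
  refine mem_frontier_convexHull_of_inner_le hc0 hx_hull ?_
  rintro _ ⟨m, hm, rfl⟩
  exact hxi ▸ hmin m hm

lemma last_sub_first_mem_hull_edges {K : ℕ} (hv : ConvexPath e (K + 2) v)
    (ht : turnSum v K < π) :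
    v (K + 1) - v 0 ∈ PointedCone.hull ℝ {edge v 0, edge v K} := by
  obtain ⟨σ, hσ, hK⟩ := hv.edge_eq_smul_rot K (by omega)
  rw [← Finset.sum_range_sub, hK]
  refine Submodule.sum_mem _ fun j hj => ?_
  have hjK : j ≤ K := Nat.lt_succ_iff.1 (Finset.mem_range.1 hj)
  obtain ⟨ρ, hρ, hρj⟩ := hv.edge_eq_smul_rot j (by omega)
  change edge v j ∈ _
  rw [hρj]
  exact smul_rot_mem_hull (turnSum_nonneg v j) (monotone_turnSum v hjK) ht hρ.le hσ _

lemma endRays_meet (hv : ConvexPath e k v) (ht : turnSum v (k - 2) < π) (hk : 2 ≤ k) :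
    (ray (v 0) (v 1 - v 0) ∩ ray (v (k - 1)) (v (k - 2) - v (k - 1))).Nonempty := by
  obtain ⟨K, rfl⟩ := Nat.exists_eq_add_of_le' hk
  obtain ⟨t, s, hts⟩ := Submodule.mem_span_pair.1 (hv.last_sub_first_mem_hull_edges ht)
  refine ⟨v 0 + (t : ℝ) • (v 1 - v 0), ⟨t, t.2, rfl⟩, s, s.2, ?_⟩
  simp only [edge, ← Nonneg.coe_smul] at hts
  rw [show K + 2 - 1 = K + 1 by omega, show K + 2 - 2 = K by omega]
  linear_combination (norm := module) hts

end ConvexPath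

lemma List.setOf_mem_eq_image_getD {α : Type*} (l : List α) (d : α) :
    {x | x ∈ l} = (l.getD · d) '' Iio l.length := by
  ext x
  simp only [mem_ofPred_eq, mem_image, mem_Iio, List.mem_iff_getElem]
  constructor
  · rintro ⟨i, hi, rfl⟩
    exact ⟨i, hi, List.getD_eq_getElem _ _ hi⟩
  · rintro ⟨i, hi, rfl⟩
    exact ⟨i, hi, (List.getD_eq_getElem _ _ hi).symm⟩

lemma exists_mem_segment_of_mem_segChain {l : List Pt} {x : Pt} (hx : x ∈ segChain l) :
    ∃ i, i + 1 < l.length ∧ x ∈ segment ℝ (l.getD i 0) (l.getD (i + 1) 0) := by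
  simp only [segChain, mem_iUnion, exists_prop] at hx
  obtain ⟨p, hp, hxp⟩ := hx
  obtain ⟨i, hi, rfl⟩ := List.mem_iff_getElem.1 hp
  have hi1 : i + 1 < l.length := by simp at hi; omega
  refine ⟨i, hi1, ?_⟩
  simp only [List.getElem_zip, List.getElem_tail] at hxp
  rwa [List.getD_eq_getElem _ _ hi1, List.getD_eq_getElem _ _ (Nat.lt_of_succ_lt hi1)]

lemma ConvexChain.exists_convexPath {l : List Pt} (hc : ConvexChain l) :
    ∃ e, ConvexPath e l.length (l.getD · 0) := by
  obtain ⟨hnd, -, hturn⟩ := hc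
  have hne : ∀ i, i + 1 < l.length → edge (l.getD · 0) i ≠ 0 := fun i hi => by
    rw [edge, List.getD_eq_getElem _ _ hi, List.getD_eq_getElem _ _ (Nat.lt_of_succ_lt hi),
      sub_ne_zero, Ne, hnd.getElem_inj_iff]
    omega
  rcases hturn with hturn | hturn
  · exact ⟨1, Or.inl rfl, hne, fun i hi => by simpa [edge] using hturn i hi⟩
  · exact ⟨-1, Or.inr rfl, hne, fun i hi => by simpa [edge] using hturn i hi⟩

/-- A convex polygonal chain whose total turning angle is strictly less than
180° is simplifiable: its two end rays intersect (and, being convex, it is hull-honest). -/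
theorem convex_chain_simplifiable (l : List Pt) (hc : ConvexChain l)
    (ht : turningAngle l < Real.pi) : Simplifiable l := by
  obtain ⟨e, hv⟩ := hc.exists_convexPath
  refine ⟨hc.2.1, fun x hx => ?_, hv.endRays_meet ht hc.2.1⟩
  obtain ⟨i, hi, hx⟩ := exists_mem_segment_of_mem_segChain hx
  rw [List.setOf_mem_eq_image_getD l 0]
  exact hv.segment_subset_frontier_convexHull ht hi hx
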